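/- Let T₁, ..., T₅ be elements of a group satisfying the chain relations T_iT_jT_i = T_jT_iT_j when |i−j| = 1 and T_iT_j = T_jT_i when |i−j| ≥ 2 (also with an element T₆ commuting with T₁, T₂, T₄, T₅ and braiding with T₅ and T₁ cyclically, indices mod 6). Let Γ be a subgroup containing T₁T₄, T₂T₅, T₃T₆, T₁T₃T₅, T₂T₄T₆, and α := T₁T₂T₃T₄T₅. Then T₃ ∈ Γ. -/
import Mathlib

private lemma swap_aux {G : Type*} [Group G] {a b : G} (h : a * b = b * a) (c : G) :
    a * (b * c) = b * (a * c) := by rw [← mul_assoc, h, mul_assoc]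

/-- Abstract genus-2 computation: for `T : Fin 6 → G` satisfying the cyclic
braid and commutation relations, if `Γ` contains `T₁T₄`, `T₂T₅`, `T₃T₆`,
`T₁T₃T₅`, `T₂T₄T₆` and `α = T₁T₂T₃T₄T₅`, then `T₃ ∈ Γ`.
(Here `T i` for `i : Fin 6` corresponds to `T_{i+1}`.) -/
theorem stmt17 {G : Type*} [Group G] (T : Fin 6 → G) (Γ : Subgroup G)
    (hbraid : ∀ i : Fin 6, T i * T (i + 1) * T i = T (i + 1) * T i * T (i + 1))
    (hcomm : ∀ i j : Fin 6, i ≠ j + 1 → j ≠ i + 1 → T i * T j = T j * T i)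
    (h14 : T 0 * T 3 ∈ Γ) (h25 : T 1 * T 4 ∈ Γ) (h36 : T 2 * T 5 ∈ Γ)
    (h135 : T 0 * T 2 * T 4 ∈ Γ) (h246 : T 1 * T 3 * T 5 ∈ Γ)
    (hα : T 0 * T 1 * T 2 * T 3 * T 4 ∈ Γ) :
    T 2 ∈ Γ := by
  have c31 : Commute (T 3) (T 1) := hcomm 3 1 (by decide) (by decide)
  have c41 : Commute (T 4) (T 1) := hcomm 4 1 (by decide) (by decide)
  have c42 : Commute (T 4) (T 2) := hcomm 4 2 (by decide) (by decide)
  have c40 : Commute (T 4) (T 0) := hcomm 4 0 (by decide) (by decide)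
  have c51 : Commute (T 5) (T 1) := hcomm 5 1 (by decide) (by decide)
  have c52 : Commute (T 5) (T 2) := hcomm 5 2 (by decide) (by decide)
  -- Step 1: α (T₂T₅)⁻¹ (T₁T₄)⁻¹ = T₁T₂T₃T₂⁻¹T₁⁻¹ ∈ Γ
  have m1 : T 0 * T 1 * T 2 * T 3 * T 4 * (T 1 * T 4)⁻¹ * (T 0 * T 3)⁻¹ ∈ Γ :=
    mul_mem (mul_mem hα (inv_mem h25)) (inv_mem h14)
  have e1 : T 0 * T 1 * T 2 * T 3 * T 4 * (T 1 * T 4)⁻¹ * (T 0 * T 3)⁻¹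
      = T 0 * (T 1 * (T 2 * ((T 1)⁻¹ * (T 0)⁻¹))) := by
    simp only [mul_inv_rev, mul_assoc, mul_inv_cancel_left, inv_mul_cancel_left]
    rw [swap_aux c31.inv_right.eq, mul_inv_cancel_left]
  rw [e1] at m1
  -- Step 2: conjugate by (T₁T₃T₅)⁻¹
  have m2 : (T 0 * T 2 * T 4)⁻¹ * (T 0 * (T 1 * (T 2 * ((T 1)⁻¹ * (T 0)⁻¹)))) * (T 0 * T 2 * T 4) ∈ Γ :=
    mul_mem (mul_mem (inv_mem h135) m1) h135
  have e2 : (T 0 * T 2 * T 4)⁻¹ * (T 0 * (T 1 * (T 2 * ((T 1)⁻¹ * (T 0)⁻¹)))) * (T 0 * T 2 * T 4)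
      = (T 2)⁻¹ * (T 1 * (T 2 * ((T 1)⁻¹ * T 2))) := by
    simp only [mul_inv_rev, mul_assoc, mul_inv_cancel_left, inv_mul_cancel_left]
    rw [swap_aux c42.inv_left.inv_right.eq, swap_aux c41.inv_left.eq, swap_aux c42.inv_left.eq,
        swap_aux c41.inv_left.inv_right.eq, swap_aux c42.inv_left.eq, inv_mul_cancel, mul_one]
  rw [e2] at m2
  -- Step 3: conjugate by T₃T₆
  have m3 : (T 2 * T 5) * ((T 2)⁻¹ * (T 1 * (T 2 * ((T 1)⁻¹ * T 2)))) * (T 2 * T 5)⁻¹ ∈ Γ :=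
    mul_mem (mul_mem h36 m2) (inv_mem h36)
  have e3 : (T 2 * T 5) * ((T 2)⁻¹ * (T 1 * (T 2 * ((T 1)⁻¹ * T 2)))) * (T 2 * T 5)⁻¹
      = T 1 * (T 2 * (T 1)⁻¹) := by
    simp only [mul_inv_rev, mul_assoc, mul_inv_cancel_left, inv_mul_cancel_left]
    rw [swap_aux c52.inv_right.eq, swap_aux c51.eq, swap_aux c52.eq, swap_aux c51.inv_right.eq,
        swap_aux c52.eq, mul_inv_cancel_left, mul_inv_cancel_left, mul_inv_cancel, mul_one]
  rw [e3] at m3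
  -- Step 4: conjugate by (T₂T₅)⁻¹
  have m4 : (T 1 * T 4)⁻¹ * (T 1 * (T 2 * (T 1)⁻¹)) * (T 1 * T 4) ∈ Γ :=
    mul_mem (mul_mem (inv_mem h25) m3) h25
  have e4 : (T 1 * T 4)⁻¹ * (T 1 * (T 2 * (T 1)⁻¹)) * (T 1 * T 4) = T 2 := by
    simp only [mul_inv_rev, mul_assoc, mul_inv_cancel_left, inv_mul_cancel_left]
    rw [swap_aux c42.inv_left.eq, inv_mul_cancel, mul_one]
  rwa [e4] at m4
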